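/- Let G be a finite simple graph with maximum degree at most Δ, let K be a clique of size Δ in G, and suppose there exist two distinct non-adjacent vertices u', v' outside K each having a neighbor in K. Let G₀ be obtained from G − V(K) by adding the edge u'v'. Then α(G) ≥ α(G₀) + 1. -/

import Mathlib

/-!
A vertex `k` of a `Δ`-clique `K` already has `Δ - 1` neighbours inside `K`, so when all degrees
are at most `Δ` it has at most one neighbour outside `K`. Take a maximum independent set `S` of
`G₀`; it is independent in `G - K` and cannot contain both `u'` and `v'`. If every vertex of `K`
had a neighbour in `S`, the neighbours of `u'` and of `v'` in `K` would have `u'` and `v'` as their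
unique outside neighbours, forcing both into `S`. So some `k ∈ K` has no neighbour in `S`, and
`S ∪ {k}` is independent in `G`.
-/

open SimpleGraph

/-- A finset is independent in `G` if no two distinct members are adjacent. -/
def IsIndepFinset {V : Type*} (G : SimpleGraph V) (s : Finset V) : Prop :=
  ∀ v ∈ s, ∀ w ∈ s, v ≠ w → ¬ G.Adj v w

/-- The independence number: the largest cardinality of an independent finset. -/
noncomputable def indepNum {V : Type*} (G : SimpleGraph V) : ℕ :=
  sSup {n | ∃ s : Finset V, IsIndepFinset G s ∧ s.card = n}

/-- The closed neighborhood of a vertex, as a finset. -/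
def closedNbhd {V : Type*} [Fintype V] [DecidableEq V] (G : SimpleGraph V)
    [DecidableRel G.Adj] (v : V) : Finset V :=
  insert v (G.neighborFinset v)

namespace IsIndepFinset

variable {V : Type*} {G H : SimpleGraph V}

theorem anti {s : Finset V} (hGH : G ≤ H) (hs : IsIndepFinset H s) : IsIndepFinset G s :=
  fun v hv w hw hvw hadj => hs v hv w hw hvw (hGH hadj)

theorem insert [DecidableEq V] {s : Finset V} {v : V} (hs : IsIndepFinset G s)
    (hv : ∀ w ∈ s, ¬ G.Adj v w) : IsIndepFinset G (insert v s) := by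
  intro x hx y hy hxy
  rcases Finset.mem_insert.mp hx with rfl | hxs
  · rcases Finset.mem_insert.mp hy with rfl | hys
    · exact absurd rfl hxy
    · exact hv y hys
  · rcases Finset.mem_insert.mp hy with rfl | hys
    · exact fun hadj => hv x hxs hadj.symm
    · exact hs x hxs y hys hxy

theorem map_induce {A : Set V} {s : Finset A} (hs : IsIndepFinset (G.induce A) s) :
    IsIndepFinset G (s.map (Function.Embedding.subtype _)) := by
  simp only [IsIndepFinset, Finset.mem_map, Function.Embedding.coe_subtype]
  rintro _ ⟨x, hx, rfl⟩ _ ⟨y, hy, rfl⟩ hxy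
  exact hs x hx y hy (fun h => hxy (congrArg Subtype.val h))

theorem not_both_mem_of_sup_edge {s : Finset V} {x y : V} (hxy : x ≠ y)
    (hs : IsIndepFinset (G ⊔ fromEdgeSet {s(x, y)}) s) : ¬ (x ∈ s ∧ y ∈ s) :=
  fun ⟨hx, hy⟩ => hs x hx y hy hxy (Or.inr ⟨rfl, hxy⟩)

end IsIndepFinset

section indepNum

variable {V : Type*} [Finite V]

theorem bddAbove_card_isIndepFinset (G : SimpleGraph V) :
    BddAbove {n | ∃ s : Finset V, IsIndepFinset G s ∧ s.card = n} := by
  have := Fintype.ofFinite V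
  exact ⟨Fintype.card V, by rintro _ ⟨s, -, rfl⟩; exact s.card_le_univ⟩

theorem IsIndepFinset.card_le_indepNum {G : SimpleGraph V} {s : Finset V}
    (hs : IsIndepFinset G s) : s.card ≤ _root_.indepNum G :=
  le_csSup (bddAbove_card_isIndepFinset G) ⟨s, hs, rfl⟩

theorem exists_isIndepFinset_card_eq_indepNum (G : SimpleGraph V) :
    ∃ s : Finset V, IsIndepFinset G s ∧ s.card = _root_.indepNum G := by
  refine Nat.sSup_mem ?_ (bddAbove_card_isIndepFinset G)
  exact ⟨0, ∅, fun v hv => absurd hv (Finset.notMem_empty v), rfl⟩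

theorem indepNum_add_one_le_of_forall_isIndepFinset {W : Type*} [Finite W] {G : SimpleGraph V}
    {H : SimpleGraph W}
    (hext : ∀ S : Finset V, IsIndepFinset G S →
      ∃ T : Finset W, IsIndepFinset H T ∧ T.card = S.card + 1) :
    _root_.indepNum G + 1 ≤ _root_.indepNum H := by
  obtain ⟨S, hS, hScard⟩ := exists_isIndepFinset_card_eq_indepNum G
  obtain ⟨T, hT, hTcard⟩ := hext S hS
  exact hScard ▸ hTcard ▸ hT.card_le_indepNum

end indepNum

namespace SimpleGraph.IsNClique

variable {V : Type*} [Fintype V] {G : SimpleGraph V} [DecidableRel G.Adj] {n : ℕ}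
  {K : Finset V}

theorem eq_of_adj_of_notMem (hK : G.IsNClique n K) {k a b : V} (hdeg : G.degree k ≤ n)
    (hk : k ∈ K) (ha : a ∉ K) (hb : b ∉ K) (hka : G.Adj k a) (hkb : G.Adj k b) : a = b := by
  classical
  by_contra hab
  have hsub : insert a (insert b (K.erase k)) ⊆ G.neighborFinset k := by
    intro x hx
    rw [mem_neighborFinset]
    rcases Finset.mem_insert.mp hx with rfl | hx
    · exact hka
    rcases Finset.mem_insert.mp hx with rfl | hx
    · exact hkb
    obtain ⟨hxk, hxK⟩ := Finset.mem_erase.mp hx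
    exact hK.1 hk hxK (Ne.symm hxk)
  have hcard : (insert a (insert b (K.erase k))).card = n + 1 := by
    rw [Finset.card_insert_of_notMem (by simp [ha, hab]),
      Finset.card_insert_of_notMem (by simp [hb]), Finset.card_erase_of_mem hk, hK.2]
    have : 0 < n := hK.2 ▸ Finset.card_pos.mpr ⟨k, hk⟩
    omega
  have := Finset.card_le_card hsub
  rw [hcard, card_neighborFinset_eq_degree] at this
  omega

theorem exists_forall_not_adj (hK : G.IsNClique n K) (hdeg : ∀ v, G.degree v ≤ n) {u v : V}
    (hu : u ∉ K) (hv : v ∉ K) (huK : ∃ w ∈ K, G.Adj u w) (hvK : ∃ w ∈ K, G.Adj v w)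
    {S : Finset V} (hSK : Disjoint S K) (hS : ¬ (u ∈ S ∧ v ∈ S)) :
    ∃ k ∈ K, ∀ s ∈ S, ¬ G.Adj k s := by
  by_contra! hcover
  have mem_of_adj : ∀ x ∉ K, (∃ w ∈ K, G.Adj x w) → x ∈ S := by
    rintro x hx ⟨w, hwK, hxw⟩
    obtain ⟨s, hsS, hws⟩ := hcover w hwK
    have hsK : s ∉ K := Finset.disjoint_left.mp hSK hsS
    rwa [← hK.eq_of_adj_of_notMem (hdeg w) hwK hsK hx hws hxw.symm]
  exact hS ⟨mem_of_adj u hu huK, mem_of_adj v hv hvK⟩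

end SimpleGraph.IsNClique

theorem stmt_2 {V : Type*} [Fintype V] (G : SimpleGraph V)
    [DecidableRel G.Adj] (Δ : ℕ)
    (hdeg : ∀ v : V, G.degree v ≤ Δ)
    (K : Finset V) (hK : G.IsNClique Δ K)
    (u' v' : V) (hu' : u' ∉ K) (hv' : v' ∉ K) (hne : u' ≠ v')
    (hu'K : ∃ w ∈ K, G.Adj u' w) (hv'K : ∃ w ∈ K, G.Adj v' w) :
    _root_.indepNum ((G.induce ((↑K : Set V)ᶜ)) ⊔
      SimpleGraph.fromEdgeSet
        {s((⟨u', by simpa using hu'⟩ : ((↑K : Set V)ᶜ : Set V)),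
           (⟨v', by simpa using hv'⟩ : ((↑K : Set V)ᶜ : Set V)))}) + 1 ≤ _root_.indepNum G := by
  classical
  refine indepNum_add_one_le_of_forall_isIndepFinset fun S hS => ?_
  set S' := S.map (Function.Embedding.subtype _)
  have hS'G : IsIndepFinset G S' := (hS.anti le_sup_left).map_induce
  have hS'K : Disjoint S' K := by
    simp only [S', Finset.disjoint_left, Finset.mem_map]
    rintro _ ⟨x, -, rfl⟩
    exact x.2
  have huv : ¬ (u' ∈ S' ∧ v' ∈ S') := fun ⟨hu, hv⟩ =>
    hS.not_both_mem_of_sup_edge (Subtype.coe_ne_coe.mp hne)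
      ⟨(Finset.mem_map' _).mp hu, (Finset.mem_map' _).mp hv⟩
  obtain ⟨k, hkK, hkS⟩ := hK.exists_forall_not_adj hdeg hu' hv' hu'K hv'K hS'K huv
  have hkS' : k ∉ S' := fun h => Finset.disjoint_left.mp hS'K h hkK
  exact ⟨insert k S', hS'G.insert hkS, by rw [Finset.card_insert_of_notMem hkS', Finset.card_map]⟩
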